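/- arXiv:2412.09433 — 2 statements merged into one kernel-verified Lean document; each statement's English description precedes it below -/
import Mathlib

section
/- Any permutation placement problem on a complete graph with at least 4 vertices admits a feasible swap-free schedule of makespan at most 2: for any two injective functions s, t from a finite agent set A to the vertex set V of a complete graph with |V| ≥ 4, there exists an injective function s' : A → V such that (i) for no pair of distinct agents a, b do we have s'(a) = s(b) and s'(b) = s(a), and (ii) for no pair of distinct agents a, b do we have t(a) = s'(b) and t(b) = s'(a). -/
/-!
Extend `t ∘ s⁻¹` to a permutation `π` of `V` and write `π = τ * σ` where neither `σ` nor `τ` has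
a 2-cycle. Then `s' = σ ∘ s` works: a swap between `s` and `s'` is a 2-cycle of `σ`, and one
between `s'` and `t` is a 2-cycle of `τ`.

The factorisation is built by peeling 2-cycles off `π`, with both factors fixing every fixed
point of `π`, so that factorisations of permutations with disjoint supports can be multiplied.
Two 2-cycles give `(a b)(c d) = (a c b)(a c d)` and three give
`(a b)(c d)(e f) = (c a e d)(c e f a b)`. A last 2-cycle is absorbed by a point `c` moved by the
rest `ρ` of `π`: `(a b) ρ = (ρ (c a)) (a b c)`, where `ρ (c a)` inserts `a` into the cycle of `c`
and so has no 2-cycle if `ρ` has none. Only a lone transposition needs two points it does not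
move: `(a b) = (a c d)(a b d c)`.
-/

open Equiv Finset Function

namespace Equiv.Perm

variable {α : Type*}

def TwoCycleFree (σ : Perm α) : Prop := ∀ x, σ (σ x) = x → σ x = x

namespace TwoCycleFree

variable {σ τ ρ : Perm α}

lemma not_exchange (hσ : TwoCycleFree σ) {ι : Type*} {f : ι → α} (hf : Injective f) {i j : ι}
    (hij : i ≠ j) : ¬(σ (f i) = f j ∧ σ (f j) = f i) := by
  rintro ⟨hi, hj⟩
  exact hij (hf ((hσ (f i) (by rw [hi, hj])).symm.trans hi))

lemma inv (hσ : TwoCycleFree σ) : TwoCycleFree σ⁻¹ := by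
  intro x hx
  have h2 : σ (σ x) = x := by simpa using congrArg (fun y => σ (σ y)) hx.symm
  rw [inv_eq_iff_eq, hσ x h2]

lemma mul_of_disjoint (h : Disjoint σ τ) (hσ : TwoCycleFree σ) (hτ : TwoCycleFree τ) :
    TwoCycleFree (σ * τ) := by
  intro x hx
  simp only [mul_apply] at hx ⊢
  have := hσ x; have := hτ x; have := h x; have := h (σ x); have := h (τ x)
  grind [EmbeddingLike.apply_eq_iff_eq]

variable [DecidableEq α]

lemma swap_mul_swap {a b c : α} (hab : a ≠ b) (hbc : b ≠ c) :
    TwoCycleFree (swap a b * swap b c) := by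
  intro x
  simp only [mul_apply, swap_apply_def]
  split_ifs <;> grind

lemma mul_swap (hρ : TwoCycleFree ρ) {a c : α} (ha : ρ a = a) (hc : ρ c ≠ c) :
    TwoCycleFree (ρ * swap c a) := by
  intro x
  have := hρ x
  simp only [mul_apply, swap_apply_def]
  split_ifs <;> grind [EmbeddingLike.apply_eq_iff_eq]

end TwoCycleFree

section swap

variable [DecidableEq α] {ρ : Perm α} {a b c d x : α}

lemma disjoint_swap (ha : ρ a = a) (hb : ρ b = b) : Disjoint (swap a b) ρ := by
  intro x
  by_cases hxa : x = a
  · exact .inr (hxa ▸ ha)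
  by_cases hxb : x = b
  · exact .inr (hxb ▸ hb)
  exact .inl (swap_apply_of_ne_of_ne hxa hxb)

lemma swap_apply_eq_self_iff (hab : a ≠ b) : swap a b x = x ↔ x ≠ a ∧ x ≠ b := by
  have := swap_apply_ne_self_iff (a := a) (b := b) (x := x)
  tauto

lemma swap_mul_apply_eq_self_iff (hab : a ≠ b) (ha : ρ a = a) (hb : ρ b = b) :
    (swap a b * ρ) x = x ↔ x ≠ a ∧ x ≠ b ∧ ρ x = x := by
  rw [(disjoint_swap ha hb).mul_apply_eq_iff, swap_apply_eq_self_iff hab, and_assoc]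

lemma swap_mul_eq_mul_swap_mul_swap_mul_swap (hab : a ≠ b) (hcb : c ≠ b) (ha : ρ a = a)
    (hb : ρ b = b) : swap a b * ρ = ρ * swap c a * (swap b c * swap c a) := by
  rw [mul_assoc, ← mul_assoc (swap c a), swap_mul_swap_mul_swap hcb.symm hab.symm,
    (disjoint_swap ha hb).commute.eq]

lemma swap_mul_swap_eq_swap_mul_swap_mul_swap_mul_swap (hda : d ≠ a) (hdc : d ≠ c) :
    swap a b * swap c d = swap b a * swap a c * (swap d a * swap a c) := by
  rw [mul_assoc, ← mul_assoc (swap a c), swap_mul_swap_mul_swap hda hdc, swap_comm b a]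

end swap

def HasTwoCycleFreeFactors (π : Perm α) : Prop :=
  ∃ τ σ : Perm α, TwoCycleFree τ ∧ TwoCycleFree σ ∧ (∀ x, π x = x → τ x = x ∧ σ x = x) ∧
    τ * σ = π

namespace HasTwoCycleFreeFactors

variable {π ρ : Perm α}

lemma of_twoCycleFree (hπ : TwoCycleFree π) : HasTwoCycleFreeFactors π :=
  ⟨π, 1, hπ, fun _ _ => rfl, fun _ hx => ⟨hx, rfl⟩, mul_one π⟩

variable [DecidableEq α] {a b c d e f : α}

lemma swap_mul_of_twoCycleFree (hab : a ≠ b) (ha : ρ a = a) (hb : ρ b = b)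
    (hρ : TwoCycleFree ρ) (hc : ρ c ≠ c) : HasTwoCycleFreeFactors (swap a b * ρ) := by
  have hca : c ≠ a := fun h => hc (h ▸ ha)
  have hcb : c ≠ b := fun h => hc (h ▸ hb)
  refine ⟨ρ * swap c a, swap b c * swap c a, hρ.mul_swap ha hc,
    TwoCycleFree.swap_mul_swap hcb.symm hca, fun x hx => ?_,
    (swap_mul_eq_mul_swap_mul_swap_mul_swap hab hcb ha hb).symm⟩
  obtain ⟨hxa, hxb, hρx⟩ := (swap_mul_apply_eq_self_iff hab ha hb).1 hx
  have hxc : x ≠ c := fun h => hc (h ▸ hρx)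
  simp [swap_apply_of_ne_of_ne, hxa, hxb, hxc, hρx]

lemma swap_mul_swap_mul (hab : a ≠ b) (hcd : c ≠ d) (hc : ρ c = c) (hd : ρ d = d)
    (ha : (swap c d * ρ) a = a) (hb : (swap c d * ρ) b = b) (hρ : HasTwoCycleFreeFactors ρ) :
    HasTwoCycleFreeFactors (swap a b * (swap c d * ρ)) := by
  obtain ⟨hac, had, hρa⟩ := (swap_mul_apply_eq_self_iff hcd hc hd).1 ha
  obtain ⟨hbc, hbd, hρb⟩ := (swap_mul_apply_eq_self_iff hcd hc hd).1 hb
  obtain ⟨τ, σ, hτ, hσ, hfix, rfl⟩ := hρ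
  obtain ⟨hτa, hσa⟩ := hfix a hρa
  obtain ⟨hτb, hσb⟩ := hfix b hρb
  obtain ⟨hτc, hσc⟩ := hfix c hc
  obtain ⟨hτd, hσd⟩ := hfix d hd
  have hcomm : τ * (swap d a * swap a c) = swap d a * swap a c * τ :=
    ((disjoint_swap hτd hτa).mul_left (disjoint_swap hτa hτc)).commute.eq.symm
  refine ⟨swap b a * swap a c * τ, swap d a * swap a c * σ,
    (TwoCycleFree.swap_mul_swap hab.symm hac).mul_of_disjoint
      ((disjoint_swap hτb hτa).mul_left (disjoint_swap hτa hτc)) hτ,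
    (TwoCycleFree.swap_mul_swap had.symm hac).mul_of_disjoint
      ((disjoint_swap hσd hσa).mul_left (disjoint_swap hσa hσc)) hσ, fun x hx => ?_, ?_⟩
  · obtain ⟨hxa, hxb, hx⟩ := (swap_mul_apply_eq_self_iff hab ha hb).1 hx
    obtain ⟨hxc, hxd, hx⟩ := (swap_mul_apply_eq_self_iff hcd hc hd).1 hx
    obtain ⟨hτx, hσx⟩ := hfix x hx
    simp [swap_apply_of_ne_of_ne, hxa, hxb, hxc, hxd, hτx, hσx]
  · calc swap b a * swap a c * τ * (swap d a * swap a c * σ)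
        = swap b a * swap a c * (τ * (swap d a * swap a c)) * σ := by simp only [mul_assoc]
      _ = swap b a * swap a c * (swap d a * swap a c) * (τ * σ) := by
        rw [hcomm]; simp only [mul_assoc]
      _ = swap a b * (swap c d * (τ * σ)) := by
        rw [← swap_mul_swap_eq_swap_mul_swap_mul_swap_mul_swap had.symm hcd.symm, mul_assoc]

lemma swap_mul_swap_mul_swap (hab : a ≠ b) (hcd : c ≠ d) (hef : e ≠ f) (hc : swap e f c = c)
    (hd : swap e f d = d) (ha : (swap c d * swap e f) a = a) (hb : (swap c d * swap e f) b = b) :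
    HasTwoCycleFreeFactors (swap a b * (swap c d * swap e f)) := by
  obtain ⟨hce, hcf⟩ := (swap_apply_eq_self_iff hef).1 hc
  obtain ⟨hde, hdf⟩ := (swap_apply_eq_self_iff hef).1 hd
  obtain ⟨hac, had, hefa⟩ := (swap_mul_apply_eq_self_iff hcd hc hd).1 ha
  obtain ⟨hbc, hbd, hefb⟩ := (swap_mul_apply_eq_self_iff hcd hc hd).1 hb
  obtain ⟨hae, haf⟩ := (swap_apply_eq_self_iff hef).1 hefa
  obtain ⟨hbe, hbf⟩ := (swap_apply_eq_self_iff hef).1 hefb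
  have hρa : (swap d c * swap c e) a = a := by simp [swap_apply_of_ne_of_ne, *]
  have hρb : (swap d c * swap c e) b = b := by simp [swap_apply_of_ne_of_ne, *]
  refine ⟨swap d c * swap c e * swap c a, swap b c * swap c a * swap c f * swap c e,
    (TwoCycleFree.swap_mul_swap hcd.symm hce).mul_swap hρa (by grind [mul_apply]),
    ((TwoCycleFree.swap_mul_swap hbc hac.symm).mul_swap
      (by grind [mul_apply]) (by grind [mul_apply])).mul_swap
      (by grind [mul_apply]) (by grind [mul_apply]), fun x hx => ?_, ?_⟩
  · obtain ⟨hxa, hxb, hx⟩ := (swap_mul_apply_eq_self_iff hab ha hb).1 hx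
    obtain ⟨hxc, hxd, hx⟩ := (swap_mul_apply_eq_self_iff hcd hc hd).1 hx
    obtain ⟨hxe, hxf⟩ := (swap_apply_eq_self_iff hef).1 hx
    simp [swap_apply_of_ne_of_ne, hxa, hxb, hxc, hxd, hxe, hxf]
  · calc swap d c * swap c e * swap c a * (swap b c * swap c a * swap c f * swap c e)
        = swap d c * swap c e * swap c a * (swap b c * swap c a) * (swap f c * swap c e) := by
          rw [swap_comm c f]; simp only [mul_assoc]
      _ = swap a b * (swap d c * swap c e) * (swap f c * swap c e) := by
        rw [← swap_mul_eq_mul_swap_mul_swap_mul_swap hab hbc.symm hρa hρb]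
      _ = swap a b * (swap c d * swap e f) := by
        rw [swap_mul_swap_eq_swap_mul_swap_mul_swap_mul_swap hcf.symm hef.symm]; simp only [mul_assoc]

variable [Fintype α]

lemma exists_swap_mul_eq_of_not_twoCycleFree (hπ : ¬TwoCycleFree π) :
    ∃ a b ρ, a ≠ b ∧ ρ a = a ∧ ρ b = b ∧ #ρ.support < #π.support ∧ swap a b * ρ = π := by
  obtain ⟨a, h2, h1⟩ : ∃ a, π (π a) = a ∧ π a ≠ a := by simpa [TwoCycleFree] using hπ
  exact ⟨a, π a, swap a (π a) * π, h1.symm, by simp, by simp [h2], card_support_swap_mul h1,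
    swap_mul_self_mul _ _ _⟩

theorem of_not_isSwap (π : Perm α) (hπ : ¬π.IsSwap) : HasTwoCycleFreeFactors π := by
  induction h : #π.support using Nat.strong_induction_on generalizing π with
  | _ n ih =>
  by_cases h2 : TwoCycleFree π
  · exact of_twoCycleFree h2
  obtain ⟨a, b, ρ, hab, ha, hb, hlt, rfl⟩ := exists_swap_mul_eq_of_not_twoCycleFree h2
  by_cases hρ : TwoCycleFree ρ
  · obtain ⟨c, hc⟩ : ∃ c, ρ c ≠ c := by
      by_contra! h1
      exact hπ ⟨a, b, hab, by rw [show ρ = 1 from Equiv.ext h1, mul_one]⟩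
    exact swap_mul_of_twoCycleFree hab ha hb hρ hc
  obtain ⟨c, d, ρ', hcd, hc, hd, hlt', rfl⟩ := exists_swap_mul_eq_of_not_twoCycleFree hρ
  by_cases hρ' : ρ'.IsSwap
  · obtain ⟨e, f, hef, rfl⟩ := hρ'
    exact swap_mul_swap_mul_swap hab hcd hef hc hd ha hb
  · exact swap_mul_swap_mul hab hcd hc hd ha hb (ih _ (by omega) ρ' hρ' rfl)

end HasTwoCycleFreeFactors

theorem exists_twoCycleFree_mul_eq [Fintype α] (hα : 4 ≤ Fintype.card α) (π : Perm α) :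
    ∃ τ σ : Perm α, TwoCycleFree τ ∧ TwoCycleFree σ ∧ τ * σ = π := by
  classical
  by_cases hπ : π.IsSwap
  · obtain ⟨a, b, hab, rfl⟩ := hπ
    obtain ⟨c, hc, d, hd, hcd⟩ := one_lt_card.1 <| show 1 < #({a, b}ᶜ : Finset α) by
      rw [card_compl]
      have := card_le_two (a := a) (b := b)
      omega
    simp only [mem_compl, mem_insert, mem_singleton, not_or] at hc hd
    have hρ := TwoCycleFree.swap_mul_swap hc.1 (Ne.symm hd.1)
    refine ⟨(swap c a * swap a d)⁻¹, swap c a * swap a d * swap a b, hρ.inv,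
      hρ.mul_swap (by grind [mul_apply]) (by grind [mul_apply]), inv_mul_cancel_left _ _⟩
  · obtain ⟨τ, σ, hτ, hσ, -, h⟩ := HasTwoCycleFreeFactors.of_not_isSwap π hπ
    exact ⟨τ, σ, hτ, hσ, h⟩

end Equiv.Perm

/-- Any permutation placement problem on a complete graph with at least 4 vertices
admits a feasible swap-free intermediate placement: there is an injective s' with no
swap between s and s' and no swap between s' and t. -/
theorem clique_two_step_schedule
    (A V : Type*) [Fintype A] [Fintype V]
    (hV : 4 ≤ Fintype.card V)
    (s t : A → V) (hs : Function.Injective s) (ht : Function.Injective t) :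
    ∃ s' : A → V, Function.Injective s' ∧
      (∀ a b : A, a ≠ b → ¬(s' a = s b ∧ s' b = s a)) ∧
      (∀ a b : A, a ≠ b → ¬(t a = s' b ∧ t b = s' a)) := by
  classical
  obtain ⟨π, hπ⟩ := Perm.exists_extending_pair s t hs ht
  obtain ⟨τ, σ, hτ, hσ, rfl⟩ := Perm.exists_twoCycleFree_mul_eq hV π
  refine ⟨σ ∘ s, σ.injective.comp hs, fun a b hab => hσ.not_exchange hs hab,
    fun a b hab h => hτ.not_exchange (σ.injective.comp hs) hab ?_⟩
  simpa [← hπ] using h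
end

section
/- If there are at least two swapping pairs among injective placements s_0 and t on a complete graph, then rotating the agents α_1,...,α_p, β_1,...,β_p of the p ≥ 2 swapping pairs along a cycle of length p+1 yields an intermediate injective placement s_1 with no swap between s_0 and s_1 and no swap between s_1 and t. -/
/-- Index-level rotation: `s₁ = s₀ ∘ swapRho` on swap agents. -/
def swapRho {p : ℕ} : Fin p ⊕ Fin p → Fin p ⊕ Fin p
  | .inl i => if i.1 + 1 < p then .inl i else .inr ⟨0, by have := i.isLt; omega⟩
  | .inr i => if h : i.1 + 1 < p then .inr ⟨i.1 + 1, h⟩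
              else .inl ⟨p - 1, by have := i.isLt; omega⟩

/-- Index-level map with `s₁ = t ∘ swapTau` on swap agents. -/
def swapTau {p : ℕ} : Fin p ⊕ Fin p → Fin p ⊕ Fin p
  | .inl i => if i.1 + 1 < p then .inr i else .inl ⟨0, by have := i.isLt; omega⟩
  | .inr i => if h : i.1 + 1 < p then .inl ⟨i.1 + 1, h⟩ else .inr i

section
variable {p : ℕ}

lemma rho_inl_pos {i : Fin p} (h : i.1 + 1 < p) : swapRho (.inl i) = .inl i := by
  simp [swapRho, h]

lemma rho_inl_neg {i : Fin p} (h : ¬ i.1 + 1 < p) :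
    swapRho (.inl i) = .inr ⟨0, by have := i.isLt; omega⟩ := by
  simp [swapRho, h]

lemma rho_inr_pos {i : Fin p} (h : i.1 + 1 < p) :
    swapRho (.inr i) = .inr ⟨i.1 + 1, h⟩ := by
  simp [swapRho, h]

lemma rho_inr_neg {i : Fin p} (h : ¬ i.1 + 1 < p) :
    swapRho (.inr i) = .inl ⟨p - 1, by have := i.isLt; omega⟩ := by
  simp [swapRho, h]

lemma tau_inl_pos {i : Fin p} (h : i.1 + 1 < p) : swapTau (.inl i) = .inr i := by
  simp [swapTau, h]

lemma tau_inl_neg {i : Fin p} (h : ¬ i.1 + 1 < p) :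
    swapTau (.inl i) = .inl ⟨0, by have := i.isLt; omega⟩ := by
  simp [swapTau, h]

lemma tau_inr_pos {i : Fin p} (h : i.1 + 1 < p) :
    swapTau (.inr i) = .inl ⟨i.1 + 1, h⟩ := by
  simp [swapTau, h]

lemma tau_inr_neg {i : Fin p} (h : ¬ i.1 + 1 < p) : swapTau (.inr i) = .inr i := by
  simp [swapTau, h]

lemma swapRho_inj : Function.Injective (swapRho (p := p)) := by
  rintro (i | i) (j | j) h
  · by_cases h1 : i.1 + 1 < p
    · by_cases h2 : j.1 + 1 < p
      · rw [rho_inl_pos h1, rho_inl_pos h2] at h; exact h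
      · rw [rho_inl_pos h1, rho_inl_neg h2] at h; simp at h
    · by_cases h2 : j.1 + 1 < p
      · rw [rho_inl_neg h1, rho_inl_pos h2] at h; simp at h
      · have hi := i.isLt; have hj := j.isLt
        exact congrArg Sum.inl (Fin.ext (by omega))
  · by_cases h1 : i.1 + 1 < p
    · by_cases h2 : j.1 + 1 < p
      · rw [rho_inl_pos h1, rho_inr_pos h2] at h; simp at h
      · rw [rho_inl_pos h1, rho_inr_neg h2] at h
        simp [Fin.ext_iff] at h; omega
    · by_cases h2 : j.1 + 1 < p
      · rw [rho_inl_neg h1, rho_inr_pos h2] at h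
        simp [Fin.ext_iff] at h
      · rw [rho_inl_neg h1, rho_inr_neg h2] at h; simp at h
  · by_cases h1 : i.1 + 1 < p
    · by_cases h2 : j.1 + 1 < p
      · rw [rho_inr_pos h1, rho_inl_pos h2] at h; simp at h
      · rw [rho_inr_pos h1, rho_inl_neg h2] at h
        simp [Fin.ext_iff] at h
    · by_cases h2 : j.1 + 1 < p
      · rw [rho_inr_neg h1, rho_inl_pos h2] at h
        simp [Fin.ext_iff] at h; omega
      · rw [rho_inr_neg h1, rho_inl_neg h2] at h; simp at h
  · by_cases h1 : i.1 + 1 < p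
    · by_cases h2 : j.1 + 1 < p
      · rw [rho_inr_pos h1, rho_inr_pos h2] at h
        simp only [Sum.inr.injEq, Fin.ext_iff] at h ⊢
        omega
      · rw [rho_inr_pos h1, rho_inr_neg h2] at h; simp at h
    · by_cases h2 : j.1 + 1 < p
      · rw [rho_inr_neg h1, rho_inr_pos h2] at h; simp at h
      · have hi := i.isLt; have hj := j.isLt
        exact congrArg Sum.inr (Fin.ext (by omega))

lemma swapRho_sq (hp : 2 ≤ p) (x : Fin p ⊕ Fin p)
    (h : swapRho (swapRho x) = x) : swapRho x = x := by
  have hp2 : (1 : ℕ) < p := hp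
  rcases x with i | i
  · by_cases h1 : i.1 + 1 < p
    · exact rho_inl_pos h1
    · rw [rho_inl_neg h1, rho_inr_pos hp2] at h
      simp at h
  · by_cases h1 : i.1 + 1 < p
    · rw [rho_inr_pos h1] at h
      by_cases h2 : i.1 + 1 + 1 < p
      · rw [rho_inr_pos h2] at h
        simp only [Sum.inr.injEq, Fin.ext_iff] at h
        exact absurd h (by omega)
      · rw [rho_inr_neg h2] at h
        simp at h
    · have hi := i.isLt
      rw [rho_inr_neg h1, rho_inl_neg (show ¬ p - 1 + 1 < p by omega)] at h
      simp only [Sum.inr.injEq, Fin.ext_iff] at h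
      exact absurd h.symm (by omega)

lemma swapTau_sq (hp : 2 ≤ p) (x : Fin p ⊕ Fin p)
    (h : swapTau (swapTau x) = x) : swapTau x = x := by
  have hp2 : (1 : ℕ) < p := hp
  rcases x with i | i
  · by_cases h1 : i.1 + 1 < p
    · rw [tau_inl_pos h1, tau_inr_pos h1] at h
      simp only [Sum.inl.injEq, Fin.ext_iff] at h
      exact absurd h (by omega)
    · rw [tau_inl_neg h1, tau_inl_pos hp2] at h
      simp at h
  · by_cases h1 : i.1 + 1 < p
    · rw [tau_inr_pos h1] at h
      by_cases h2 : i.1 + 1 + 1 < p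
      · rw [tau_inl_pos h2] at h
        simp only [Sum.inr.injEq, Fin.ext_iff] at h
        exact absurd h (by omega)
      · rw [tau_inl_neg h2] at h
        simp at h
    · exact tau_inr_neg h1

end

/-- If there are at least two swapping pairs (α_i, β_i), i ∈ [p], among injective
placements s₀ and t on a complete graph, then rotating the agents of the swapping
pairs along a cycle of length p+1 yields an intermediate injective placement s₁
with no swap between s₀ and s₁ and no swap between s₁ and t. -/
theorem rotating_swapping_pairs
    (A V : Type*) (p : ℕ) (hp : 2 ≤ p)
    (s₀ t : A → V) (hs : Function.Injective s₀) (ht : Function.Injective t)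
    (α β : Fin p → A)
    (hdist : Function.Injective (Sum.elim α β : Fin p ⊕ Fin p → A))
    (hswap : ∀ i : Fin p, α i ≠ β i ∧ s₀ (α i) = t (β i) ∧ s₀ (β i) = t (α i))
    (hall : ∀ a b : A, a ≠ b → s₀ a = t b → s₀ b = t a →
      ∃ i : Fin p, (a = α i ∧ b = β i) ∨ (a = β i ∧ b = α i))
    (s₁ : A → V)
    (h1 : ∀ i : Fin p, i.val + 1 < p → s₁ (α i) = s₀ (α i))
    (h2 : s₁ (α ⟨p - 1, by omega⟩) = s₀ (β ⟨0, by omega⟩))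
    (h3 : ∀ i : Fin p, (h : i.val + 1 < p) → s₁ (β i) = s₀ (β ⟨i.val + 1, h⟩))
    (h4 : s₁ (β ⟨p - 1, by omega⟩) = s₀ (α ⟨p - 1, by omega⟩))
    (h5 : ∀ a : A, (∀ i : Fin p, a ≠ α i ∧ a ≠ β i) → s₁ a = s₀ a) :
    Function.Injective s₁ ∧
      (∀ a b : A, a ≠ b → ¬(s₁ a = s₀ b ∧ s₁ b = s₀ a)) ∧
      (∀ a b : A, a ≠ b → ¬(t a = s₁ b ∧ t b = s₁ a)) := by
  have hq : p - 1 < p := by omega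
  set e : Fin p ⊕ Fin p → A := Sum.elim α β with he
  -- value of s₁ on swap agents, in terms of s₀
  have hs1e : ∀ x : Fin p ⊕ Fin p, s₁ (e x) = s₀ (e (swapRho x)) := by
    rintro (i | i)
    · by_cases h : i.1 + 1 < p
      · rw [rho_inl_pos h]; exact h1 i h
      · have hiv : i.1 = p - 1 := by have := i.isLt; omega
        have hi : i = ⟨p - 1, hq⟩ := Fin.ext hiv
        subst hi
        rw [rho_inl_neg h]
        exact h2
    · by_cases h : i.1 + 1 < p
      · rw [rho_inr_pos h]; exact h3 i h
      · have hiv : i.1 = p - 1 := by have := i.isLt; omega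
        have hi : i = ⟨p - 1, hq⟩ := Fin.ext hiv
        subst hi
        rw [rho_inr_neg h]
        exact h4
  -- value of s₁ on swap agents, in terms of t
  have hte : ∀ x : Fin p ⊕ Fin p, s₁ (e x) = t (e (swapTau x)) := by
    rintro (i | i)
    · by_cases h : i.1 + 1 < p
      · rw [tau_inl_pos h]
        show s₁ (α i) = t (β i)
        rw [h1 i h]; exact (hswap i).2.1
      · have hiv : i.1 = p - 1 := by have := i.isLt; omega
        have hi : i = ⟨p - 1, hq⟩ := Fin.ext hiv
        subst hi
        rw [tau_inl_neg h]
        show s₁ (α ⟨p - 1, by omega⟩) = t (α ⟨0, by omega⟩)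
        rw [h2]; exact (hswap ⟨0, by omega⟩).2.2
    · by_cases h : i.1 + 1 < p
      · rw [tau_inr_pos h]
        show s₁ (β i) = t (α ⟨i.1 + 1, h⟩)
        rw [h3 i h]; exact (hswap ⟨i.1 + 1, h⟩).2.2
      · have hiv : i.1 = p - 1 := by have := i.isLt; omega
        have hi : i = ⟨p - 1, hq⟩ := Fin.ext hiv
        subst hi
        rw [tau_inr_neg h]
        show s₁ (β ⟨p - 1, by omega⟩) = t (β ⟨p - 1, by omega⟩)
        rw [h4]; exact (hswap ⟨p - 1, by omega⟩).2.1
  -- every agent is a swap agent or fixed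
  have herange : ∀ a : A, (∃ x, e x = a) ∨ (∀ i : Fin p, a ≠ α i ∧ a ≠ β i) := by
    intro a
    by_cases h : ∃ x, e x = a
    · exact Or.inl h
    · push_neg at h
      exact Or.inr fun i => ⟨fun hc => h (.inl i) hc.symm, fun hc => h (.inr i) hc.symm⟩
  have hnot : ∀ (b : A), (∀ i : Fin p, b ≠ α i ∧ b ≠ β i) → ∀ x, e x ≠ b := by
    rintro b hb (i | i) hc
    · exact (hb i).1 hc.symm
    · exact (hb i).2 hc.symm
  refine ⟨?_, ?_, ?_⟩
  · -- injectivity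
    intro a b hab
    rcases herange a with ⟨x, rfl⟩ | ha
    · rcases herange b with ⟨y, rfl⟩ | hb
      · rw [hs1e, hs1e] at hab
        exact congrArg e (swapRho_inj (hdist (hs hab)))
      · rw [hs1e, h5 b hb] at hab
        exact absurd (hs hab) (hnot b hb _)
    · rcases herange b with ⟨y, rfl⟩ | hb
      · rw [h5 a ha, hs1e] at hab
        exact absurd (hs hab).symm (hnot a ha _)
      · rw [h5 a ha, h5 b hb] at hab
        exact hs hab
  · -- no swap between s₀ and s₁
    rintro a b hab ⟨hab1, hab2⟩
    rcases herange a with ⟨x, rfl⟩ | ha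
    · rcases herange b with ⟨y, rfl⟩ | hb
      · rw [hs1e] at hab1 hab2
        have h1' : swapRho x = y := hdist (hs hab1)
        have h2' : swapRho y = x := hdist (hs hab2)
        have h3' : swapRho x = x := swapRho_sq hp x (by rw [h1', h2'])
        exact hab (congrArg e (h3'.symm.trans h1'))
      · rw [h5 b hb] at hab2
        exact hab (hs hab2).symm
    · rw [h5 a ha] at hab1
      exact hab (hs hab1)
  · -- no swap between s₁ and t
    rintro a b hab ⟨hab1, hab2⟩
    rcases herange b with ⟨y, rfl⟩ | hb
    · rw [hte] at hab1
      have ha' : a = e (swapTau y) := ht hab1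
      rw [ha', hte] at hab2
      have htt : swapTau y = y := swapTau_sq hp y (hdist (ht hab2)).symm
      exact hab (by rw [ha', htt])
    · rcases herange a with ⟨x, rfl⟩ | ha
      · rw [hte] at hab2
        exact hnot b hb _ (ht hab2).symm
      · rw [h5 b hb] at hab1
        rw [h5 a ha] at hab2
        obtain ⟨i, hi | hi⟩ := hall a b hab hab2.symm hab1.symm
        · exact (ha i).1 hi.1
        · exact (ha i).2 hi.1
end
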